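/- arXiv:1801.09875 — 6 statements merged into one kernel-verified Lean document; each statement's English description precedes it below -/
import Mathlib

section
/- Suppose α₁ ≥ α₂. Then there exists y₀ ∈ ℕ such that for every n ≥ 0, almost surely on the event {ζ₁(n) ≥ 1 and ζ₂(n) ≥ y₀}: E[U_{n+1}² | 𝓕_n] ≥ U_n²·(1 + 2(α₁ + rβ₂)/R_n). -/
/-!
On `{ζ₁(n) ≥ 1, ζ₂(n) ≥ 1}` all four jump rates are switched on and their total `W` equals `R`.
A step moves `U` by `+1, -r, -1, +r`, so `R · E[U_{n+1}² | ℱ n] = Σ (U + δ)² · rate_δ`.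
Because `r` solves `β₂r² + (α₁ - α₂)r - β₁ = 0`, the drift `Σ δ · rate_δ` equals
`(l₁ - r l₂) + (α₁ + rβ₂)(ζ₁ - rζ₂)`, and `d` is chosen so that the cross term `2U · drift` is
`2(α₁ + rβ₂)U² - (α₁ + β₂r²)U`, whose `ζ₁`-part cancels against that of `Σ δ² · rate_δ`.
What remains, `R · E[U_{n+1}² | ℱ n] - U²(R + 2(α₁ + rβ₂))`, is affine in `ζ₂` with positive slope,
hence nonnegative once `ζ₂ ≥ y₀`. Integrability is automatic because `ζ₁ + ζ₂ ≤ x₀ + y₀ + n`.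
-/

open MeasureTheory Filter

theorem pos_and_quadratic_eq_zero_of_eq_root {a b c r : ℝ} (ha : 0 < a) (hc : 0 < c)
    (hr : r = (-b + √(b ^ 2 + 4 * c * a)) / (2 * a)) : 0 < r ∧ a * r ^ 2 + b * r - c = 0 := by
  have hdisc : discrim a b (-c) = √(b ^ 2 + 4 * c * a) * √(b ^ 2 + 4 * c * a) := by
    rw [Real.mul_self_sqrt (by positivity), discrim]; ring
  refine ⟨?_, ?_⟩
  · have : b < √(b ^ 2 + 4 * c * a) :=
      calc b ≤ |b| := le_abs_self b
        _ = √(b ^ 2) := (Real.sqrt_sq_eq_abs b).symm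
        _ < √(b ^ 2 + 4 * c * a) := Real.sqrt_lt_sqrt (sq_nonneg b) (by linarith [mul_pos hc ha])
    rw [hr]; exact div_pos (by linarith) (by linarith)
  · have := ((quadratic_eq_zero_iff ha.ne' hdisc r).mpr (Or.inl hr))
    linear_combination this

section Drift

variable {l₁ l₂ β₁ β₂ α₁ α₂ r d : ℝ}

theorem sq_drift_eq (hroot : β₂ * r ^ 2 + (α₁ - α₂) * r - β₁ = 0)
    (hd : 2 * (α₁ + r * β₂) * d + (2 * (l₁ - r * l₂) + α₁ + β₂ * r ^ 2) = 0) (x y : ℝ) :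
    (x + 1 - r * y - d) ^ 2 * (l₁ + α₁ * x) + (x - r * (y + 1) - d) ^ 2 * (l₂ + α₂ * y)
        + (x - 1 - r * y - d) ^ 2 * (β₁ * y) + (x - r * (y - 1) - d) ^ 2 * (β₂ * x)
      = (x - r * y - d) ^ 2 * ((α₁ + β₂) * x + (α₂ + β₁) * y + l₁ + l₂ + 2 * (α₁ + r * β₂))
        + (l₁ + r ^ 2 * l₂ + (α₁ + β₂ * r ^ 2) * d)
        + (β₁ + r ^ 2 * α₂ + (α₁ + β₂ * r ^ 2) * r) * y := by
  linear_combination (x - r * y - d) * hd + 2 * y * (x - r * y - d) * hroot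

theorem exists_sq_drift_ge (hl₁ : 0 < l₁) (hl₂ : 0 < l₂) (hβ₁ : 0 < β₁) (hβ₂ : 0 < β₂)
    (hα₁ : 0 ≤ α₁) (hα₂ : 0 ≤ α₂) (hr : 0 < r) (hroot : β₂ * r ^ 2 + (α₁ - α₂) * r - β₁ = 0)
    (hd : 2 * (α₁ + r * β₂) * d + (2 * (l₁ - r * l₂) + α₁ + β₂ * r ^ 2) = 0) :
    ∃ y₀ : ℕ, ∀ x y R : ℝ, 1 ≤ x → y₀ ≤ y → R = (α₁ + β₂) * x + (α₂ + β₁) * y + l₁ + l₂ →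
      (x - r * y - d) ^ 2 * (1 + 2 * (α₁ + r * β₂) / R) ≤
        (x + 1 - r * y - d) ^ 2 * ((l₁ + α₁ * x) / R) + (x - r * (y + 1) - d) ^ 2 * ((l₂ + α₂ * y) / R)
          + (x - 1 - r * y - d) ^ 2 * (β₁ * y / R) + (x - r * (y - 1) - d) ^ 2 * (β₂ * x / R) := by
  set k := β₁ + r ^ 2 * α₂ + (α₁ + β₂ * r ^ 2) * r
  have hk : 0 < k := by positivity
  obtain ⟨y₀, hy₀⟩ := exists_nat_ge (-(l₁ + r ^ 2 * l₂ + (α₁ + β₂ * r ^ 2) * d) / k)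
  refine ⟨y₀, fun x y R hx hy hR => ?_⟩
  have hy0 : 0 ≤ y := le_trans (Nat.cast_nonneg y₀) hy
  have hRpos : 0 < R := by rw [hR]; nlinarith
  have hconst : 0 ≤ (l₁ + r ^ 2 * l₂ + (α₁ + β₂ * r ^ 2) * d) + k * y := by
    rw [div_le_iff₀ hk] at hy₀; nlinarith
  have key := sq_drift_eq hroot hd x y
  rw [← hR] at key
  calc (x - r * y - d) ^ 2 * (1 + 2 * (α₁ + r * β₂) / R)
      = (x - r * y - d) ^ 2 * (R + 2 * (α₁ + r * β₂)) / R := by field_simp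
    _ ≤ ((x - r * y - d) ^ 2 * (R + 2 * (α₁ + r * β₂)) + (l₁ + r ^ 2 * l₂ + (α₁ + β₂ * r ^ 2) * d)
        + k * y) / R := by gcongr; linarith
    _ = _ := by rw [← key]; field_simp

end Drift

section NearestNeighbourWalk

variable {Ω : Type*} {m0 : MeasurableSpace Ω} {P : Measure Ω}

theorem Measurable.nat_pair_comp {m : MeasurableSpace Ω} {β : Type*} [MeasurableSpace β]
    {X Y : Ω → ℕ} (hX : Measurable[m] X) (hY : Measurable[m] Y) (φ : ℕ → ℕ → β) :
    Measurable[m] fun ω => φ (X ω) (Y ω) :=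
  (measurable_of_countable (Function.uncurry φ)).comp (hX.prodMk hY)

theorem integrable_nat_pair_comp_of_ae_add_le [IsFiniteMeasure P] {X Y : Ω → ℕ}
    (hX : Measurable X) (hY : Measurable Y) {N : ℕ} (hN : ∀ᵐ ω ∂P, X ω + Y ω ≤ N)
    (φ : ℕ → ℕ → ℝ) : Integrable (fun ω => φ (X ω) (Y ω)) P := by
  refine Integrable.of_bound (hX.nat_pair_comp hY φ).aestronglyMeasurable
    (∑ i ∈ Finset.range (N + 1), ∑ j ∈ Finset.range (N + 1), |φ i j|) ?_
  filter_upwards [hN] with ω hω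
  have mem : ∀ {i}, i ≤ N → i ∈ Finset.range (N + 1) := fun h => Finset.mem_range.mpr (by omega)
  calc ‖φ (X ω) (Y ω)‖ ≤ ∑ j ∈ Finset.range (N + 1), |φ (X ω) j| :=
        Finset.single_le_sum (fun j _ => abs_nonneg (φ (X ω) j)) (mem (by omega))
    _ ≤ _ := Finset.single_le_sum (f := fun i => ∑ j ∈ Finset.range (N + 1), |φ i j|)
        (fun i _ => Finset.sum_nonneg fun j _ => abs_nonneg _) (mem (by omega))

theorem condExp_sum_indicator_ae_eq [IsFiniteMeasure P] {m : MeasurableSpace Ω} {ι : Type*}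
    (s : Finset ι) {A : ι → Set Ω} {f : ι → Ω → ℝ} (hA : ∀ i ∈ s, MeasurableSet[m0] (A i))
    (hfm : ∀ i ∈ s, StronglyMeasurable[m] (f i)) (hf : ∀ i ∈ s, Integrable (f i) P) :
    P[∑ i ∈ s, (A i).indicator (f i) | m] =ᵐ[P]
      ∑ i ∈ s, f i * P[(A i).indicator (fun _ => (1 : ℝ)) | m] := by
  refine (condExp_finsetSum (fun i hi => (hf i hi).indicator (hA i hi)) m).trans ?_
  refine eventuallyEq_sum fun i hi => ?_
  have hmul : (A i).indicator (f i) = f i * (A i).indicator (fun _ => (1 : ℝ)) := by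
    ext ω; by_cases h : ω ∈ A i <;> simp [h]
  rw [hmul]
  refine condExp_mul_of_stronglyMeasurable_left (hfm i hi) ?_
    ((integrable_const 1).indicator (hA i hi))
  rw [← hmul]; exact (hf i hi).indicator (hA i hi)

variable {ζ₁ ζ₂ : ℕ → Ω → ℕ}

theorem ae_add_le_of_step (x₀ y₀ : ℕ) (hinit : ∀ ω, ζ₁ 0 ω = x₀ ∧ ζ₂ 0 ω = y₀)
    (hstep : ∀ n, ∀ᵐ ω ∂P,
      (ζ₁ (n + 1) ω = ζ₁ n ω + 1 ∧ ζ₂ (n + 1) ω = ζ₂ n ω) ∨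
      (ζ₁ (n + 1) ω = ζ₁ n ω ∧ ζ₂ (n + 1) ω = ζ₂ n ω + 1) ∨
      (ζ₁ (n + 1) ω + 1 = ζ₁ n ω ∧ ζ₂ (n + 1) ω = ζ₂ n ω) ∨
      (ζ₁ (n + 1) ω = ζ₁ n ω ∧ ζ₂ (n + 1) ω + 1 = ζ₂ n ω)) (n : ℕ) :
    ∀ᵐ ω ∂P, ζ₁ n ω + ζ₂ n ω ≤ x₀ + y₀ + n := by
  induction n with
  | zero => exact ae_of_all _ fun ω => by simp [hinit ω]
  | succ n ih =>
    filter_upwards [ih, hstep n] with ω hle hstepω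
    omega

/-- The truncated subtractions `ζ₁ n ω - 1`, `ζ₂ n ω - 1` are harmless: they only meet the events
on which the corresponding coordinate has just decreased by one. -/
theorem condExp_nat_pair_comp_succ_ae_eq [IsFiniteMeasure P] (ℱ : Filtration ℕ m0)
    (hζ₁ : ∀ n, Measurable[ℱ n] (ζ₁ n)) (hζ₂ : ∀ n, Measurable[ℱ n] (ζ₂ n))
    (φ : ℕ → ℕ → ℝ) {n N : ℕ} (hN : ∀ᵐ ω ∂P, ζ₁ n ω + ζ₂ n ω ≤ N)
    (hstep : ∀ᵐ ω ∂P,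
      (ζ₁ (n + 1) ω = ζ₁ n ω + 1 ∧ ζ₂ (n + 1) ω = ζ₂ n ω) ∨
      (ζ₁ (n + 1) ω = ζ₁ n ω ∧ ζ₂ (n + 1) ω = ζ₂ n ω + 1) ∨
      (ζ₁ (n + 1) ω + 1 = ζ₁ n ω ∧ ζ₂ (n + 1) ω = ζ₂ n ω) ∨
      (ζ₁ (n + 1) ω = ζ₁ n ω ∧ ζ₂ (n + 1) ω + 1 = ζ₂ n ω)) :
    P[fun ω => φ (ζ₁ (n + 1) ω) (ζ₂ (n + 1) ω) | ℱ n] =ᵐ[P] fun ω =>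
      φ (ζ₁ n ω + 1) (ζ₂ n ω) * P[({ω' | ζ₁ (n + 1) ω' = ζ₁ n ω' + 1 ∧ ζ₂ (n + 1) ω' = ζ₂ n ω'} :
        Set Ω).indicator (fun _ => (1 : ℝ)) | ℱ n] ω
      + φ (ζ₁ n ω) (ζ₂ n ω + 1) * P[({ω' | ζ₁ (n + 1) ω' = ζ₁ n ω' ∧ ζ₂ (n + 1) ω' = ζ₂ n ω' + 1} :
        Set Ω).indicator (fun _ => (1 : ℝ)) | ℱ n] ω
      + φ (ζ₁ n ω - 1) (ζ₂ n ω) * P[({ω' | ζ₁ (n + 1) ω' + 1 = ζ₁ n ω' ∧ ζ₂ (n + 1) ω' = ζ₂ n ω'} :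
        Set Ω).indicator (fun _ => (1 : ℝ)) | ℱ n] ω
      + φ (ζ₁ n ω) (ζ₂ n ω - 1) * P[({ω' | ζ₁ (n + 1) ω' = ζ₁ n ω' ∧ ζ₂ (n + 1) ω' + 1 = ζ₂ n ω'} :
        Set Ω).indicator (fun _ => (1 : ℝ)) | ℱ n] ω := by
  set A : Fin 4 → Set Ω := ![{ω' | ζ₁ (n + 1) ω' = ζ₁ n ω' + 1 ∧ ζ₂ (n + 1) ω' = ζ₂ n ω'},
    {ω' | ζ₁ (n + 1) ω' = ζ₁ n ω' ∧ ζ₂ (n + 1) ω' = ζ₂ n ω' + 1},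
    {ω' | ζ₁ (n + 1) ω' + 1 = ζ₁ n ω' ∧ ζ₂ (n + 1) ω' = ζ₂ n ω'},
    {ω' | ζ₁ (n + 1) ω' = ζ₁ n ω' ∧ ζ₂ (n + 1) ω' + 1 = ζ₂ n ω'}]
  set ψ : Fin 4 → ℕ → ℕ → ℝ := ![fun a b => φ (a + 1) b, fun a b => φ a (b + 1),
    fun a b => φ (a - 1) b, fun a b => φ a (b - 1)]
  have hdecomp : (fun ω => φ (ζ₁ (n + 1) ω) (ζ₂ (n + 1) ω)) =ᵐ[P]
      ∑ i, (A i).indicator (fun ω => ψ i (ζ₁ n ω) (ζ₂ n ω)) := by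
    filter_upwards [hstep] with ω hω
    simp only [Fin.sum_univ_four, Finset.sum_apply, A, ψ, Set.indicator_apply, Set.mem_ofPred_eq,
      Matrix.cons_val]
    rcases hω with ⟨h₁, h₂⟩ | ⟨h₁, h₂⟩ | ⟨h₁, h₂⟩ | ⟨h₁, h₂⟩
    · simp [h₁, h₂, add_assoc]
    · simp [h₁, h₂, add_assoc]
    · simp [← h₁, h₂, add_assoc]
    · simp [h₁, ← h₂, add_assoc]
  have hψm : ∀ i, StronglyMeasurable[ℱ n] fun ω => ψ i (ζ₁ n ω) (ζ₂ n ω) := fun i =>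
    ((hζ₁ n).nat_pair_comp (hζ₂ n) (ψ i)).stronglyMeasurable
  have h₁m : ∀ k, Measurable (ζ₁ k) := fun k => (hζ₁ k).mono (ℱ.le k) le_rfl
  have h₂m : ∀ k, Measurable (ζ₂ k) := fun k => (hζ₂ k).mono (ℱ.le k) le_rfl
  have hAm : ∀ i, MeasurableSet (A i) := by
    intro i
    fin_cases i <;>
      exact (measurableSet_eq_fun (by fun_prop) (by fun_prop)).inter
        (measurableSet_eq_fun (by fun_prop) (by fun_prop))
  refine (condExp_congr_ae hdecomp).trans ((condExp_sum_indicator_ae_eq _ (fun i _ => hAm i)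
    (fun i _ => hψm i) (fun i _ => integrable_nat_pair_comp_of_ae_add_le
      (h₁m n) (h₂m n) hN (ψ i))).trans ?_)
  filter_upwards with ω
  simp [Fin.sum_univ_four, A, ψ]

end NearestNeighbourWalk

theorem stmt_10_general
    {Ω : Type*} {m0 : MeasurableSpace Ω} (P : Measure Ω) [IsProbabilityMeasure P]
    (ℱ : Filtration ℕ m0)
    (l₁ l₂ β₁ β₂ α₁ α₂ : ℝ)
    (hl₁ : 0 < l₁) (hl₂ : 0 < l₂) (hβ₁ : 0 < β₁) (hβ₂ : 0 < β₂)
    (hα₁ : 0 ≤ α₁) (hα₂ : 0 ≤ α₂)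
    (ζ₁ ζ₂ : ℕ → Ω → ℕ)
    (hζ₁meas : ∀ n, Measurable[ℱ n] (ζ₁ n)) (hζ₂meas : ∀ n, Measurable[ℱ n] (ζ₂ n))
    (x₀ y₀ : ℕ) (hinit : ∀ ω, ζ₁ 0 ω = x₀ ∧ ζ₂ 0 ω = y₀)
    (hstep : ∀ n, ∀ᵐ ω ∂P,
      (ζ₁ (n + 1) ω = ζ₁ n ω + 1 ∧ ζ₂ (n + 1) ω = ζ₂ n ω) ∨
      (ζ₁ (n + 1) ω = ζ₁ n ω ∧ ζ₂ (n + 1) ω = ζ₂ n ω + 1) ∨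
      (ζ₁ (n + 1) ω + 1 = ζ₁ n ω ∧ ζ₂ (n + 1) ω = ζ₂ n ω) ∨
      (ζ₁ (n + 1) ω = ζ₁ n ω ∧ ζ₂ (n + 1) ω + 1 = ζ₂ n ω))
    (W : ℕ → Ω → ℝ)
    (hW : ∀ n ω, W n ω =
      (l₁ + α₁ * (ζ₁ n ω : ℝ)) + (l₂ + α₂ * (ζ₂ n ω : ℝ)) +
      (if 1 ≤ ζ₁ n ω then β₁ * (ζ₂ n ω : ℝ) else 0) +
      (if 1 ≤ ζ₂ n ω then β₂ * (ζ₁ n ω : ℝ) else 0))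
    (hright : ∀ n,
      P[({ω' | ζ₁ (n + 1) ω' = ζ₁ n ω' + 1 ∧ ζ₂ (n + 1) ω' = ζ₂ n ω'} : Set Ω).indicator
          (fun _ => (1 : ℝ)) | ℱ n]
        =ᵐ[P] fun ω => (l₁ + α₁ * (ζ₁ n ω : ℝ)) / W n ω)
    (hupp : ∀ n,
      P[({ω' | ζ₁ (n + 1) ω' = ζ₁ n ω' ∧ ζ₂ (n + 1) ω' = ζ₂ n ω' + 1} : Set Ω).indicator
          (fun _ => (1 : ℝ)) | ℱ n]
        =ᵐ[P] fun ω => (l₂ + α₂ * (ζ₂ n ω : ℝ)) / W n ω)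
    (hleft : ∀ n,
      P[({ω' | ζ₁ (n + 1) ω' + 1 = ζ₁ n ω' ∧ ζ₂ (n + 1) ω' = ζ₂ n ω'} : Set Ω).indicator
          (fun _ => (1 : ℝ)) | ℱ n]
        =ᵐ[P] fun ω => (if 1 ≤ ζ₁ n ω then β₁ * (ζ₂ n ω : ℝ) else 0) / W n ω)
    (hdownp : ∀ n,
      P[({ω' | ζ₁ (n + 1) ω' = ζ₁ n ω' ∧ ζ₂ (n + 1) ω' + 1 = ζ₂ n ω'} : Set Ω).indicator
          (fun _ => (1 : ℝ)) | ℱ n]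
        =ᵐ[P] fun ω => (if 1 ≤ ζ₂ n ω then β₂ * (ζ₁ n ω : ℝ) else 0) / W n ω)
    (r : ℝ) (hr : r = (-(α₁ - α₂) + Real.sqrt ((α₁ - α₂) ^ 2 + 4 * β₁ * β₂)) / (2 * β₂))
    (d : ℝ) (hd : d = -(2 * (l₁ - r * l₂) + α₁ + β₂ * r ^ 2) / (2 * (α₁ + r * β₂)))
    (R : ℕ → Ω → ℝ)
    (hR : ∀ n ω, R n ω = (α₁ + β₂) * (ζ₁ n ω : ℝ) + (α₂ + β₁) * (ζ₂ n ω : ℝ) + l₁ + l₂)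
    (U : ℕ → Ω → ℝ)
    (hU : ∀ n ω, U n ω = (ζ₁ n ω : ℝ) - r * (ζ₂ n ω : ℝ) - d) :
    ∃ y₀ : ℕ, ∀ n, ∀ᵐ ω ∂P, 1 ≤ ζ₁ n ω → y₀ ≤ ζ₂ n ω →
      U n ω ^ 2 * (1 + 2 * (α₁ + r * β₂) / R n ω) ≤
        (P[(fun ω' => U (n + 1) ω' ^ 2) | ℱ n]) ω := by
  obtain ⟨hr0, hroot⟩ := pos_and_quadratic_eq_zero_of_eq_root hβ₂ hβ₁ hr
  have hd' : 2 * (α₁ + r * β₂) * d + (2 * (l₁ - r * l₂) + α₁ + β₂ * r ^ 2) = 0 := by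
    rw [hd]; field_simp; ring
  obtain ⟨y₁, hdrift⟩ := exists_sq_drift_ge hl₁ hl₂ hβ₁ hβ₂ hα₁ hα₂ hr0 hroot hd'
  refine ⟨max y₁ 1, fun n => ?_⟩
  have hce := condExp_nat_pair_comp_succ_ae_eq ℱ hζ₁meas hζ₂meas
    (fun a b => ((a : ℝ) - r * b - d) ^ 2) (ae_add_le_of_step x₀ y₀ hinit hstep n) (hstep n)
  filter_upwards [hce, hright n, hupp n, hleft n, hdownp n] with ω hω h₁ h₂ h₃ h₄ hx hy
  obtain ⟨hy₁, hy⟩ := max_le_iff.mp hy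
  have hWR : W n ω = R n ω := by rw [hW, hR, if_pos hx, if_pos hy]; ring
  simp only [hU]
  rw [hω, h₁, h₂, h₃, h₄, hWR, if_pos hx, if_pos hy]
  push_cast [Nat.cast_sub hx, Nat.cast_sub hy]
  exact hdrift _ _ _ (by exact_mod_cast hx) (by exact_mod_cast hy₁) (hR n ω)

/-- Growth of the conditional second moment of `Uₙ`. For the
discrete-time competition process with linear interaction, if `α₁ ≥ α₂` then there exists
`y₀ ∈ ℕ` such that for every `n`, almost surely on the event `{ζ₁(n) ≥ 1 and ζ₂(n) ≥ y₀}`,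
`E[U_{n+1}² | ℱ n] ≥ Uₙ²·(1 + 2(α₁ + rβ₂)/Rₙ)`, where `U(x,y) = x − ry − d`. -/
theorem stmt_10
    {Ω : Type*} {m0 : MeasurableSpace Ω} (P : Measure Ω) [IsProbabilityMeasure P]
    (ℱ : Filtration ℕ m0)
    (l₁ l₂ β₁ β₂ α₁ α₂ : ℝ)
    (hl₁ : 0 < l₁) (hl₂ : 0 < l₂) (hβ₁ : 0 < β₁) (hβ₂ : 0 < β₂)
    (hα₁ : 0 ≤ α₁) (hα₂ : 0 ≤ α₂)
    (ζ₁ ζ₂ : ℕ → Ω → ℕ)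
    (hζ₁meas : ∀ n, Measurable[ℱ n] (ζ₁ n)) (hζ₂meas : ∀ n, Measurable[ℱ n] (ζ₂ n))
    (x₀ y₀ : ℕ) (hinit : ∀ ω, ζ₁ 0 ω = x₀ ∧ ζ₂ 0 ω = y₀)
    (hstep : ∀ n, ∀ᵐ ω ∂P,
      (ζ₁ (n + 1) ω = ζ₁ n ω + 1 ∧ ζ₂ (n + 1) ω = ζ₂ n ω) ∨
      (ζ₁ (n + 1) ω = ζ₁ n ω ∧ ζ₂ (n + 1) ω = ζ₂ n ω + 1) ∨
      (ζ₁ (n + 1) ω + 1 = ζ₁ n ω ∧ ζ₂ (n + 1) ω = ζ₂ n ω) ∨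
      (ζ₁ (n + 1) ω = ζ₁ n ω ∧ ζ₂ (n + 1) ω + 1 = ζ₂ n ω))
    (W : ℕ → Ω → ℝ)
    (hW : ∀ n ω, W n ω =
      (l₁ + α₁ * (ζ₁ n ω : ℝ)) + (l₂ + α₂ * (ζ₂ n ω : ℝ)) +
      (if 1 ≤ ζ₁ n ω then β₁ * (ζ₂ n ω : ℝ) else 0) +
      (if 1 ≤ ζ₂ n ω then β₂ * (ζ₁ n ω : ℝ) else 0))
    (hright : ∀ n,
      P[({ω' | ζ₁ (n + 1) ω' = ζ₁ n ω' + 1 ∧ ζ₂ (n + 1) ω' = ζ₂ n ω'} : Set Ω).indicator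
          (fun _ => (1 : ℝ)) | ℱ n]
        =ᵐ[P] fun ω => (l₁ + α₁ * (ζ₁ n ω : ℝ)) / W n ω)
    (hupp : ∀ n,
      P[({ω' | ζ₁ (n + 1) ω' = ζ₁ n ω' ∧ ζ₂ (n + 1) ω' = ζ₂ n ω' + 1} : Set Ω).indicator
          (fun _ => (1 : ℝ)) | ℱ n]
        =ᵐ[P] fun ω => (l₂ + α₂ * (ζ₂ n ω : ℝ)) / W n ω)
    (hleft : ∀ n,
      P[({ω' | ζ₁ (n + 1) ω' + 1 = ζ₁ n ω' ∧ ζ₂ (n + 1) ω' = ζ₂ n ω'} : Set Ω).indicator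
          (fun _ => (1 : ℝ)) | ℱ n]
        =ᵐ[P] fun ω => (if 1 ≤ ζ₁ n ω then β₁ * (ζ₂ n ω : ℝ) else 0) / W n ω)
    (hdownp : ∀ n,
      P[({ω' | ζ₁ (n + 1) ω' = ζ₁ n ω' ∧ ζ₂ (n + 1) ω' + 1 = ζ₂ n ω'} : Set Ω).indicator
          (fun _ => (1 : ℝ)) | ℱ n]
        =ᵐ[P] fun ω => (if 1 ≤ ζ₂ n ω then β₂ * (ζ₁ n ω : ℝ) else 0) / W n ω)
    (ha12 : α₂ ≤ α₁)
    (r : ℝ) (hr : r = (-(α₁ - α₂) + Real.sqrt ((α₁ - α₂) ^ 2 + 4 * β₁ * β₂)) / (2 * β₂))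
    (d : ℝ) (hd : d = -(2 * (l₁ - r * l₂) + α₁ + β₂ * r ^ 2) / (2 * (α₁ + r * β₂)))
    (R : ℕ → Ω → ℝ)
    (hR : ∀ n ω, R n ω = (α₁ + β₂) * (ζ₁ n ω : ℝ) + (α₂ + β₁) * (ζ₂ n ω : ℝ) + l₁ + l₂)
    (U : ℕ → Ω → ℝ)
    (hU : ∀ n ω, U n ω = (ζ₁ n ω : ℝ) - r * (ζ₂ n ω : ℝ) - d) :
    ∃ y₀ : ℕ, ∀ n, ∀ᵐ ω ∂P, 1 ≤ ζ₁ n ω → y₀ ≤ ζ₂ n ω →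
      U n ω ^ 2 * (1 + 2 * (α₁ + r * β₂) / R n ω) ≤
        (P[(fun ω' => U (n + 1) ω' ^ 2) | ℱ n]) ω :=
  stmt_10_general P ℱ l₁ l₂ β₁ β₂ α₁ α₂ hl₁ hl₂ hβ₁ hβ₂ hα₁ hα₂ ζ₁ ζ₂ hζ₁meas hζ₂meas x₀ y₀ hinit
    hstep W hW hright hupp hleft hdownp r hr d hd R hR U hU
end

section
/- Suppose α₁ ≥ α₂ and α₁α₂ > β₁β₂. Set k = (α₁ + rβ₂)/ρ̃ and l = −((α₁α₂ + 2α₂β₂ + β₁β₂)r + α₁α₂ + 2α₁β₁ + β₁β₂)/ρ̃. Then k > 0, l < 0, and for all real x, y: R(x,y) = (λ₁ + λ₂) + k·S(x,y) + l·T(x,y). -/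
/-!
Both signs follow from `r > 0` and `α₁, α₂ ≥ 0`. For the identity, clear the denominator `ρ̃`:
the coefficients of `x` agree by a polynomial identity, and those of `y` differ by a multiple of
`β₂r² + (α₁ − α₂)r − β₁`, which vanishes since `r` is a root.
-/

theorem quadratic_root_pos {a b c : ℝ} (ha : 0 < a) (hc : 0 < c) :
    0 < (-b + √(b ^ 2 + 4 * a * c)) / (2 * a) := by
  have hb : b < √(b ^ 2 + 4 * a * c) := Real.lt_sqrt_of_sq_lt (by nlinarith [mul_pos ha hc])
  exact div_pos (by linarith) (by positivity)

theorem quadratic_root_isRoot {a b c : ℝ} (ha : a ≠ 0) (hdisc : 0 ≤ b ^ 2 + 4 * a * c) :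
    let r := (-b + √(b ^ 2 + 4 * a * c)) / (2 * a)
    a * r ^ 2 + b * r - c = 0 := by
  intro r
  have hs : discrim a b (-c) = √(b ^ 2 + 4 * a * c) * √(b ^ 2 + 4 * a * c) := by
    rw [Real.mul_self_sqrt hdisc, discrim]; ring
  linear_combination (quadratic_eq_zero_iff ha hs r).2 (Or.inl rfl)

theorem decomposition_of_isRoot {β₁ β₂ α₁ α₂ r : ℝ} (hρ : α₁ * α₂ - β₁ * β₂ ≠ 0)
    (hroot : β₂ * r ^ 2 + (α₁ - α₂) * r - β₁ = 0) (x y : ℝ) :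
    (α₁ + β₂) * x + (α₂ + β₁) * y =
      (α₁ + r * β₂) / (α₁ * α₂ - β₁ * β₂) * ((α₁ * α₂ + β₁ * β₂ + 2 * α₂ * β₂) * x +
        (α₁ * α₂ + β₁ * β₂ + 2 * α₁ * β₁) * y) +
      -((α₁ * α₂ + 2 * α₂ * β₂ + β₁ * β₂) * r + α₁ * α₂ + 2 * α₁ * β₁ + β₁ * β₂) /
        (α₁ * α₂ - β₁ * β₂) * (β₂ * x + (r * β₂ + α₁ - α₂) * y) := by
  rw [div_mul_eq_mul_div, div_mul_eq_mul_div, ← add_div, eq_div_iff hρ]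
  linear_combination ((α₁ * α₂ + 2 * α₂ * β₂ + β₁ * β₂) * y) * hroot

theorem stmt_12_general
    (l₁ l₂ β₁ β₂ α₁ α₂ : ℝ)
    (hβ₁ : 0 < β₁) (hβ₂ : 0 < β₂)
    (hα₁ : 0 ≤ α₁) (hα₂ : 0 ≤ α₂)
    (hab : β₁ * β₂ < α₁ * α₂)
    (r : ℝ) (hr : r = (-(α₁ - α₂) + Real.sqrt ((α₁ - α₂) ^ 2 + 4 * β₁ * β₂)) / (2 * β₂))
    (R : ℝ → ℝ → ℝ) (hR : ∀ x y, R x y = (α₁ + β₂) * x + (α₂ + β₁) * y + l₁ + l₂)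
    (S : ℝ → ℝ → ℝ) (hS : ∀ x y, S x y = (α₁ * α₂ + β₁ * β₂ + 2 * α₂ * β₂) * x +
      (α₁ * α₂ + β₁ * β₂ + 2 * α₁ * β₁) * y)
    (T : ℝ → ℝ → ℝ) (hT : ∀ x y, T x y = β₂ * x + (r * β₂ + α₁ - α₂) * y)
    (k l : ℝ)
    (hk : k = (α₁ + r * β₂) / (α₁ * α₂ - β₁ * β₂))
    (hl : l = -((α₁ * α₂ + 2 * α₂ * β₂ + β₁ * β₂) * r + α₁ * α₂ + 2 * α₁ * β₁ + β₁ * β₂) /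
      (α₁ * α₂ - β₁ * β₂)) :
    0 < k ∧ l < 0 ∧ ∀ x y : ℝ, R x y = (l₁ + l₂) + k * S x y + l * T x y := by
  have hρ : 0 < α₁ * α₂ - β₁ * β₂ := sub_pos.2 hab
  rw [show 4 * β₁ * β₂ = 4 * β₂ * β₁ by ring] at hr
  have hr_pos : 0 < r := hr ▸ quadratic_root_pos hβ₂ hβ₁
  have hroot : β₂ * r ^ 2 + (α₁ - α₂) * r - β₁ = 0 :=
    hr ▸ quadratic_root_isRoot hβ₂.ne' (by positivity)
  refine ⟨hk ▸ div_pos (by positivity) hρ,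
    hl ▸ div_neg_of_neg_of_pos (neg_neg_of_pos (by positivity)) hρ, fun x y => ?_⟩
  rw [hR, hS, hT, hk, hl]
  linear_combination decomposition_of_isRoot hρ.ne' hroot x y

/-- Decomposition of `R` in terms of `S` and `T`. Suppose `α₁ ≥ α₂`
and `α₁α₂ > β₁β₂`; set `ρ̃ = α₁α₂ − β₁β₂`, `k = (α₁ + rβ₂)/ρ̃` and
`l = −((α₁α₂ + 2α₂β₂ + β₁β₂)r + α₁α₂ + 2α₁β₁ + β₁β₂)/ρ̃`, where `r` is the positive root
of `β₂r² + (α₁−α₂)r − β₁ = 0`. Then `k > 0`, `l < 0` and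
`R(x,y) = (λ₁ + λ₂) + k·S(x,y) + l·T(x,y)` for all real `x, y`. -/
theorem stmt_12
    (l₁ l₂ β₁ β₂ α₁ α₂ : ℝ)
    (hl₁ : 0 < l₁) (hl₂ : 0 < l₂) (hβ₁ : 0 < β₁) (hβ₂ : 0 < β₂)
    (hα₁ : 0 ≤ α₁) (hα₂ : 0 ≤ α₂)
    (ha12 : α₂ ≤ α₁) (hab : β₁ * β₂ < α₁ * α₂)
    (r : ℝ) (hr : r = (-(α₁ - α₂) + Real.sqrt ((α₁ - α₂) ^ 2 + 4 * β₁ * β₂)) / (2 * β₂))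
    (R : ℝ → ℝ → ℝ) (hR : ∀ x y, R x y = (α₁ + β₂) * x + (α₂ + β₁) * y + l₁ + l₂)
    (S : ℝ → ℝ → ℝ) (hS : ∀ x y, S x y = (α₁ * α₂ + β₁ * β₂ + 2 * α₂ * β₂) * x +
      (α₁ * α₂ + β₁ * β₂ + 2 * α₁ * β₁) * y)
    (T : ℝ → ℝ → ℝ) (hT : ∀ x y, T x y = β₂ * x + (r * β₂ + α₁ - α₂) * y)
    (k l : ℝ)
    (hk : k = (α₁ + r * β₂) / (α₁ * α₂ - β₁ * β₂))
    (hl : l = -((α₁ * α₂ + 2 * α₂ * β₂ + β₁ * β₂) * r + α₁ * α₂ + 2 * α₁ * β₁ + β₁ * β₂) /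
      (α₁ * α₂ - β₁ * β₂)) :
    0 < k ∧ l < 0 ∧ ∀ x y : ℝ, R x y = (l₁ + l₂) + k * S x y + l * T x y :=
  stmt_12_general l₁ l₂ β₁ β₂ α₁ α₂ hβ₁ hβ₂ hα₁ hα₂ hab r hr R hR S hS T hT k l hk hl
end

section
/- Suppose λ₁ = λ₂ = λ, α₁ = α₂ = α and β₁ = β₂ = β (symmetric case). Write V_n = ζ₁(n) − ζ₂(n) and Σ_n = ζ₁(n) + ζ₂(n). Then for every n ≥ 0, almost surely on the event {ζ₁(n) ≥ 1 and ζ₂(n) ≥ 1}: E[V_{n+1}² | 𝓕_n] = V_n²·(1 + 2(α + β)/(2λ + (α + β)Σ_n)) + 1. -/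
open MeasureTheory Filter Function

/-! Given `𝓕ₙ`, the difference `V` moves by `+1` (right or down) or by `-1` (up or left), so
`E[V_{n+1}² | 𝓕ₙ] = Σᵢ (Vₙ + jumpᵢ)² pᵢ`, the `𝓕ₙ`-measurable factors `(Vₙ ± 1)²` being bounded
(the walk starts from a deterministic state and moves one step at a time) and hence pulled out of
the conditional expectation. On `{ζ₁(n) ≥ 1, ζ₂(n) ≥ 1}` the symmetric rates give
`W = 2λ + (α + β)Σₙ`, and the claim is an algebraic identity; `W ≠ 0` there because the four
conditional probabilities sum to one. -/

section Partition

variable {Ω ι : Type*} {m m0 : MeasurableSpace Ω} {μ : Measure Ω} [Fintype ι]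
  {E : ι → Set Ω} {c : ι → Ω → ℝ} {g : Ω → ℝ}

lemma ae_eq_sum_mul_indicator (hdisj : Pairwise (Disjoint on E))
    (hcover : ∀ᵐ ω ∂μ, ∃ i, ω ∈ E i) (hg : ∀ i, ∀ ω ∈ E i, g ω = c i ω) :
    g =ᵐ[μ] ∑ i, c i * (E i).indicator (fun _ => 1) := by
  filter_upwards [hcover] with ω ⟨i, hi⟩
  rw [Finset.sum_apply, Finset.sum_eq_single i]
  · simp [Set.indicator_of_mem hi, hg i ω hi]
  · intro j _ hji
    simp [Set.indicator_of_notMem (Set.disjoint_left.mp (hdisj hji.symm) hi)]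
  · simp

lemma condExp_ae_eq_sum_mul_condExp_indicator [IsFiniteMeasure μ] (hm : m ≤ m0)
    (hE : ∀ i, MeasurableSet (E i)) (hdisj : Pairwise (Disjoint on E))
    (hcover : ∀ᵐ ω ∂μ, ∃ i, ω ∈ E i) (hc : ∀ i, StronglyMeasurable[m] (c i))
    (hcb : ∀ i, ∃ C, ∀ᵐ ω ∂μ, ‖c i ω‖ ≤ C) (hg : ∀ i, ∀ ω ∈ E i, g ω = c i ω) :
    μ[g | m] =ᵐ[μ] ∑ i, c i * μ[(E i).indicator (fun _ => 1) | m] := by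
  have hE_int : ∀ i, Integrable ((E i).indicator fun _ => (1 : ℝ)) μ :=
    fun i => (integrable_const 1).indicator (hE i)
  have hpull : ∀ i, μ[c i * (E i).indicator (fun _ => 1) | m]
      =ᵐ[μ] c i * μ[(E i).indicator (fun _ => 1) | m] := fun i =>
    (hcb i).elim fun C hC => condExp_stronglyMeasurable_mul_of_bound hm (hc i) (hE_int i) C hC
  have hint : ∀ i ∈ Finset.univ, Integrable (c i * (E i).indicator fun _ => (1 : ℝ)) μ :=
    fun i _ => (hcb i).elim fun C hC =>
      (hE_int i).bdd_mul (((hc i).mono hm).aestronglyMeasurable) hC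
  refine (condExp_congr_ae (ae_eq_sum_mul_indicator hdisj hcover hg)).trans
    ((condExp_finsetSum hint m).trans ?_)
  filter_upwards [ae_all_iff.mpr hpull] with ω hω
  simp only [Finset.sum_apply, hω]

lemma ae_sum_condExp_indicator_eq_one [IsFiniteMeasure μ] (hm : m ≤ m0)
    (hE : ∀ i, MeasurableSet (E i)) (hdisj : Pairwise (Disjoint on E))
    (hcover : ∀ᵐ ω ∂μ, ∃ i, ω ∈ E i) :
    ∀ᵐ ω ∂μ, ∑ i, μ[(E i).indicator (fun _ => (1 : ℝ)) | m] ω = 1 := by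
  have h := condExp_ae_eq_sum_mul_condExp_indicator (g := fun _ => 1) (c := fun _ _ => (1 : ℝ))
    hm hE hdisj hcover (fun _ => stronglyMeasurable_const) (fun _ => ⟨1, by simp⟩) (by simp)
  rw [condExp_const hm] at h
  filter_upwards [h] with ω hω
  simpa using hω.symm

end Partition

lemma ae_le_add_of_ae_le_succ {Ω : Type*} {m0 : MeasurableSpace Ω} {μ : Measure Ω}
    {X : ℕ → Ω → ℕ} {x₀ : ℕ} (h0 : ∀ ω, X 0 ω = x₀)
    (hX : ∀ n, ∀ᵐ ω ∂μ, X (n + 1) ω ≤ X n ω + 1) (n : ℕ) : ∀ᵐ ω ∂μ, X n ω ≤ x₀ + n := by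
  induction n with
  | zero => simp [h0]
  | succ k ih =>
    filter_upwards [ih, hX k] with ω h h'
    omega

lemma norm_sq_sub_add_le {x y X Y : ℕ} (hx : x ≤ X) (hy : y ≤ Y) {t : ℝ} (ht : |t| ≤ 1) :
    ‖((x : ℝ) - y + t) ^ 2‖ ≤ ((X : ℝ) + Y + 1) ^ 2 := by
  have hx' : (x : ℝ) ≤ X := by exact_mod_cast hx
  have hy' : (y : ℝ) ≤ Y := by exact_mod_cast hy
  obtain ⟨ht₁, ht₂⟩ := abs_le.mp ht
  rw [Real.norm_eq_abs, abs_of_nonneg (sq_nonneg _)]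
  apply sq_le_sq' <;> linarith [(x.cast_nonneg : (0 : ℝ) ≤ x), (y.cast_nonneg : (0 : ℝ) ≤ y)]

lemma sq_jump_weighted_sum_eq {l a b x y w : ℝ} (hw : w = 2 * l + (a + b) * (x + y))
    (hw₀ : w ≠ 0) :
    (x - y + 1) ^ 2 * ((l + a * x) / w) + (x - y + -1) ^ 2 * ((l + a * y) / w) +
        (x - y + -1) ^ 2 * (b * y / w) + (x - y + 1) ^ 2 * (b * x / w) =
      (x - y) ^ 2 * (1 + 2 * (a + b) / w) + 1 := by
  field_simp
  rw [hw]
  ring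

section StepEvent

variable {Ω : Type*} (ζ₁ ζ₂ : ℕ → Ω → ℕ) (n : ℕ)

def stepEvent : Fin 4 → Set Ω :=
  ![{ω | ζ₁ (n + 1) ω = ζ₁ n ω + 1 ∧ ζ₂ (n + 1) ω = ζ₂ n ω},
    {ω | ζ₁ (n + 1) ω = ζ₁ n ω ∧ ζ₂ (n + 1) ω = ζ₂ n ω + 1},
    {ω | ζ₁ (n + 1) ω + 1 = ζ₁ n ω ∧ ζ₂ (n + 1) ω = ζ₂ n ω},
    {ω | ζ₁ (n + 1) ω = ζ₁ n ω ∧ ζ₂ (n + 1) ω + 1 = ζ₂ n ω}]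

def diffJump : Fin 4 → ℝ := ![1, -1, -1, 1]

lemma abs_diffJump_le_one (i : Fin 4) : |diffJump i| ≤ 1 := by
  fin_cases i <;> simp [diffJump]

lemma pairwise_disjoint_stepEvent : Pairwise (Disjoint on stepEvent ζ₁ ζ₂ n) := by
  intro i j hij
  fin_cases i <;> fin_cases j <;>
    simp_all [stepEvent, Function.onFun, Set.disjoint_left] <;> omega

lemma measurableSet_stepEvent {m0 : MeasurableSpace Ω} (h₁ : ∀ n, Measurable (ζ₁ n))
    (h₂ : ∀ n, Measurable (ζ₂ n)) (i : Fin 4) : MeasurableSet (stepEvent ζ₁ ζ₂ n i) := by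
  fin_cases i <;>
    exact (measurableSet_eq_fun (by fun_prop) (by fun_prop)).inter
      (measurableSet_eq_fun (by fun_prop) (by fun_prop))

variable {ζ₁ ζ₂ n} {ω : Ω}

lemma succ_le_of_mem_stepEvent {i : Fin 4} (h : ω ∈ stepEvent ζ₁ ζ₂ n i) :
    ζ₁ (n + 1) ω ≤ ζ₁ n ω + 1 ∧ ζ₂ (n + 1) ω ≤ ζ₂ n ω + 1 := by
  fin_cases i <;> simp [stepEvent] at h <;> omega

lemma sub_succ_eq_of_mem_stepEvent {i : Fin 4} (h : ω ∈ stepEvent ζ₁ ζ₂ n i) :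
    (ζ₁ (n + 1) ω : ℝ) - ζ₂ (n + 1) ω = ζ₁ n ω - ζ₂ n ω + diffJump i := by
  fin_cases i <;> obtain ⟨h₁, h₂⟩ := h <;> rify at h₁ h₂ <;> simp [diffJump] <;> linarith

lemma ae_le_add_of_stepEvent {m0 : MeasurableSpace Ω} {μ : Measure Ω} {x₀ y₀ : ℕ}
    (h0 : ∀ ω, ζ₁ 0 ω = x₀ ∧ ζ₂ 0 ω = y₀)
    (hcover : ∀ n, ∀ᵐ ω ∂μ, ∃ i, ω ∈ stepEvent ζ₁ ζ₂ n i) (n : ℕ) :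
    ∀ᵐ ω ∂μ, ζ₁ n ω ≤ x₀ + n ∧ ζ₂ n ω ≤ y₀ + n := by
  have hsucc : ∀ k, ∀ᵐ ω ∂μ, ζ₁ (k + 1) ω ≤ ζ₁ k ω + 1 ∧ ζ₂ (k + 1) ω ≤ ζ₂ k ω + 1 :=
    fun k => (hcover k).mono fun ω ⟨_, hi⟩ => succ_le_of_mem_stepEvent hi
  filter_upwards
    [ae_le_add_of_ae_le_succ (fun ω => (h0 ω).1) (fun k => (hsucc k).mono fun _ h => h.1) n,
      ae_le_add_of_ae_le_succ (fun ω => (h0 ω).2) (fun k => (hsucc k).mono fun _ h => h.2) n]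
    with ω h₁ h₂ using ⟨h₁, h₂⟩

end StepEvent

theorem stmt_14_general
    {Ω : Type*} {m0 : MeasurableSpace Ω} (P : Measure Ω) [IsProbabilityMeasure P]
    (ℱ : Filtration ℕ m0)
    (l₁ l₂ β₁ β₂ α₁ α₂ : ℝ)
    (ζ₁ ζ₂ : ℕ → Ω → ℕ)
    (hζ₁meas : ∀ n, Measurable[ℱ n] (ζ₁ n)) (hζ₂meas : ∀ n, Measurable[ℱ n] (ζ₂ n))
    (x₀ y₀ : ℕ) (hinit : ∀ ω, ζ₁ 0 ω = x₀ ∧ ζ₂ 0 ω = y₀)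
    (hstep : ∀ n, ∀ᵐ ω ∂P,
      (ζ₁ (n + 1) ω = ζ₁ n ω + 1 ∧ ζ₂ (n + 1) ω = ζ₂ n ω) ∨
      (ζ₁ (n + 1) ω = ζ₁ n ω ∧ ζ₂ (n + 1) ω = ζ₂ n ω + 1) ∨
      (ζ₁ (n + 1) ω + 1 = ζ₁ n ω ∧ ζ₂ (n + 1) ω = ζ₂ n ω) ∨
      (ζ₁ (n + 1) ω = ζ₁ n ω ∧ ζ₂ (n + 1) ω + 1 = ζ₂ n ω))
    (W : ℕ → Ω → ℝ)
    (hW : ∀ n ω, W n ω =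
      (l₁ + α₁ * (ζ₁ n ω : ℝ)) + (l₂ + α₂ * (ζ₂ n ω : ℝ)) +
      (if 1 ≤ ζ₁ n ω then β₁ * (ζ₂ n ω : ℝ) else 0) +
      (if 1 ≤ ζ₂ n ω then β₂ * (ζ₁ n ω : ℝ) else 0))
    (hright : ∀ n,
      P[({ω' | ζ₁ (n + 1) ω' = ζ₁ n ω' + 1 ∧ ζ₂ (n + 1) ω' = ζ₂ n ω'} : Set Ω).indicator
          (fun _ => (1 : ℝ)) | ℱ n]
        =ᵐ[P] fun ω => (l₁ + α₁ * (ζ₁ n ω : ℝ)) / W n ω)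
    (hupp : ∀ n,
      P[({ω' | ζ₁ (n + 1) ω' = ζ₁ n ω' ∧ ζ₂ (n + 1) ω' = ζ₂ n ω' + 1} : Set Ω).indicator
          (fun _ => (1 : ℝ)) | ℱ n]
        =ᵐ[P] fun ω => (l₂ + α₂ * (ζ₂ n ω : ℝ)) / W n ω)
    (hleft : ∀ n,
      P[({ω' | ζ₁ (n + 1) ω' + 1 = ζ₁ n ω' ∧ ζ₂ (n + 1) ω' = ζ₂ n ω'} : Set Ω).indicator
          (fun _ => (1 : ℝ)) | ℱ n]
        =ᵐ[P] fun ω => (if 1 ≤ ζ₁ n ω then β₁ * (ζ₂ n ω : ℝ) else 0) / W n ω)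
    (hdownp : ∀ n,
      P[({ω' | ζ₁ (n + 1) ω' = ζ₁ n ω' ∧ ζ₂ (n + 1) ω' + 1 = ζ₂ n ω'} : Set Ω).indicator
          (fun _ => (1 : ℝ)) | ℱ n]
        =ᵐ[P] fun ω => (if 1 ≤ ζ₂ n ω then β₂ * (ζ₁ n ω : ℝ) else 0) / W n ω)
    (lam a b : ℝ) (hsyml : l₁ = lam ∧ l₂ = lam) (hsyma : α₁ = a ∧ α₂ = a)
    (hsymb : β₁ = b ∧ β₂ = b) :
    ∀ n, ∀ᵐ ω ∂P, 1 ≤ ζ₁ n ω → 1 ≤ ζ₂ n ω →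
      (P[(fun ω' => ((ζ₁ (n + 1) ω' : ℝ) - (ζ₂ (n + 1) ω' : ℝ)) ^ 2) | ℱ n]) ω =
        ((ζ₁ n ω : ℝ) - (ζ₂ n ω : ℝ)) ^ 2 *
          (1 + 2 * (a + b) / (2 * lam + (a + b) * ((ζ₁ n ω : ℝ) + (ζ₂ n ω : ℝ)))) + 1 := by
  obtain ⟨rfl, rfl⟩ := hsyml
  obtain ⟨rfl, rfl⟩ := hsyma
  obtain ⟨rfl, rfl⟩ := hsymb
  intro n
  have hmeas₁ : ∀ k, Measurable (ζ₁ k) := fun k => (hζ₁meas k).mono (ℱ.le k) le_rfl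
  have hmeas₂ : ∀ k, Measurable (ζ₂ k) := fun k => (hζ₂meas k).mono (ℱ.le k) le_rfl
  have hcover : ∀ k, ∀ᵐ ω ∂P, ∃ i, ω ∈ stepEvent ζ₁ ζ₂ k i := fun k =>
    (hstep k).mono fun ω h => by
      rcases h with h | h | h | h
      exacts [⟨0, h⟩, ⟨1, h⟩, ⟨2, h⟩, ⟨3, h⟩]
  have hbound := ae_le_add_of_stepEvent hinit hcover n
  have hcond := condExp_ae_eq_sum_mul_condExp_indicator (ℱ.le n)
    (measurableSet_stepEvent ζ₁ ζ₂ n hmeas₁ hmeas₂) (pairwise_disjoint_stepEvent ζ₁ ζ₂ n)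
    (hcover n) (g := fun ω => ((ζ₁ (n + 1) ω : ℝ) - ζ₂ (n + 1) ω) ^ 2)
    (c := fun i ω => ((ζ₁ n ω : ℝ) - ζ₂ n ω + diffJump i) ^ 2)
    (fun i => by fun_prop)
    (fun i => ⟨_, hbound.mono fun ω h => norm_sq_sub_add_le h.1 h.2 (abs_diffJump_le_one i)⟩)
    (fun i ω h => by rw [sub_succ_eq_of_mem_stepEvent h])
  have hsum := ae_sum_condExp_indicator_eq_one (ℱ.le n)
    (measurableSet_stepEvent ζ₁ ζ₂ n hmeas₁ hmeas₂) (pairwise_disjoint_stepEvent ζ₁ ζ₂ n)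
    (hcover n)
  filter_upwards [hcond, hsum, hright n, hupp n, hleft n, hdownp n]
    with ω hω hω₁ hR hU hL hD hx hy
  simp only [Fin.sum_univ_four, Finset.sum_apply, Pi.mul_apply, stepEvent, diffJump,
    Matrix.cons_val] at hω hω₁
  rw [hR, hU, hL, hD, if_pos hx, if_pos hy] at hω hω₁
  -- with `W n ω = 0` all four ratios would be `x / 0 = 0`, contradicting `hω₁`
  have hW0 : W n ω ≠ 0 := fun h0 => by simp [h0] at hω₁
  have hWω : W n ω = 2 * l₂ + (α₂ + β₂) * ((ζ₁ n ω : ℝ) + ζ₂ n ω) := by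
    rw [hW n ω, if_pos hx, if_pos hy]
    ring
  rw [hω, ← hWω]
  exact sq_jump_weighted_sum_eq hWω hW0

/-- Conditional second moment of the difference in the symmetric case.
For the discrete-time competition process with linear interaction with `λ₁ = λ₂ = λ`,
`α₁ = α₂ = α`, `β₁ = β₂ = β`, writing `Vₙ = ζ₁(n) − ζ₂(n)` and `Σₙ = ζ₁(n) + ζ₂(n)`,
for every `n`, almost surely on `{ζ₁(n) ≥ 1 and ζ₂(n) ≥ 1}`:
`E[V_{n+1}² | ℱ n] = Vₙ²·(1 + 2(α+β)/(2λ + (α+β)Σₙ)) + 1`. -/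
theorem stmt_14
    {Ω : Type*} {m0 : MeasurableSpace Ω} (P : Measure Ω) [IsProbabilityMeasure P]
    (ℱ : Filtration ℕ m0)
    (l₁ l₂ β₁ β₂ α₁ α₂ : ℝ)
    (hl₁ : 0 < l₁) (hl₂ : 0 < l₂) (hβ₁ : 0 < β₁) (hβ₂ : 0 < β₂)
    (hα₁ : 0 ≤ α₁) (hα₂ : 0 ≤ α₂)
    (ζ₁ ζ₂ : ℕ → Ω → ℕ)
    (hζ₁meas : ∀ n, Measurable[ℱ n] (ζ₁ n)) (hζ₂meas : ∀ n, Measurable[ℱ n] (ζ₂ n))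
    (x₀ y₀ : ℕ) (hinit : ∀ ω, ζ₁ 0 ω = x₀ ∧ ζ₂ 0 ω = y₀)
    (hstep : ∀ n, ∀ᵐ ω ∂P,
      (ζ₁ (n + 1) ω = ζ₁ n ω + 1 ∧ ζ₂ (n + 1) ω = ζ₂ n ω) ∨
      (ζ₁ (n + 1) ω = ζ₁ n ω ∧ ζ₂ (n + 1) ω = ζ₂ n ω + 1) ∨
      (ζ₁ (n + 1) ω + 1 = ζ₁ n ω ∧ ζ₂ (n + 1) ω = ζ₂ n ω) ∨
      (ζ₁ (n + 1) ω = ζ₁ n ω ∧ ζ₂ (n + 1) ω + 1 = ζ₂ n ω))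
    (W : ℕ → Ω → ℝ)
    (hW : ∀ n ω, W n ω =
      (l₁ + α₁ * (ζ₁ n ω : ℝ)) + (l₂ + α₂ * (ζ₂ n ω : ℝ)) +
      (if 1 ≤ ζ₁ n ω then β₁ * (ζ₂ n ω : ℝ) else 0) +
      (if 1 ≤ ζ₂ n ω then β₂ * (ζ₁ n ω : ℝ) else 0))
    (hright : ∀ n,
      P[({ω' | ζ₁ (n + 1) ω' = ζ₁ n ω' + 1 ∧ ζ₂ (n + 1) ω' = ζ₂ n ω'} : Set Ω).indicator
          (fun _ => (1 : ℝ)) | ℱ n]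
        =ᵐ[P] fun ω => (l₁ + α₁ * (ζ₁ n ω : ℝ)) / W n ω)
    (hupp : ∀ n,
      P[({ω' | ζ₁ (n + 1) ω' = ζ₁ n ω' ∧ ζ₂ (n + 1) ω' = ζ₂ n ω' + 1} : Set Ω).indicator
          (fun _ => (1 : ℝ)) | ℱ n]
        =ᵐ[P] fun ω => (l₂ + α₂ * (ζ₂ n ω : ℝ)) / W n ω)
    (hleft : ∀ n,
      P[({ω' | ζ₁ (n + 1) ω' + 1 = ζ₁ n ω' ∧ ζ₂ (n + 1) ω' = ζ₂ n ω'} : Set Ω).indicator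
          (fun _ => (1 : ℝ)) | ℱ n]
        =ᵐ[P] fun ω => (if 1 ≤ ζ₁ n ω then β₁ * (ζ₂ n ω : ℝ) else 0) / W n ω)
    (hdownp : ∀ n,
      P[({ω' | ζ₁ (n + 1) ω' = ζ₁ n ω' ∧ ζ₂ (n + 1) ω' + 1 = ζ₂ n ω'} : Set Ω).indicator
          (fun _ => (1 : ℝ)) | ℱ n]
        =ᵐ[P] fun ω => (if 1 ≤ ζ₂ n ω then β₂ * (ζ₁ n ω : ℝ) else 0) / W n ω)
    (lam a b : ℝ) (hsyml : l₁ = lam ∧ l₂ = lam) (hsyma : α₁ = a ∧ α₂ = a)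
    (hsymb : β₁ = b ∧ β₂ = b) :
    ∀ n, ∀ᵐ ω ∂P, 1 ≤ ζ₁ n ω → 1 ≤ ζ₂ n ω →
      (P[(fun ω' => ((ζ₁ (n + 1) ω' : ℝ) - (ζ₂ (n + 1) ω' : ℝ)) ^ 2) | ℱ n]) ω =
        ((ζ₁ n ω : ℝ) - (ζ₂ n ω : ℝ)) ^ 2 *
          (1 + 2 * (a + b) / (2 * lam + (a + b) * ((ζ₁ n ω : ℝ) + (ζ₂ n ω : ℝ)))) + 1 :=
  stmt_14_general P ℱ l₁ l₂ β₁ β₂ α₁ α₂ ζ₁ ζ₂ hζ₁meas hζ₂meas x₀ y₀ hinit hstep W hW hright hupp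
    hleft hdownp lam a b hsyml hsyma hsymb
end

section
/- Let α₁ > 0, λ₁ > 0, λ₂ > 0 and 0 < ν < μ. Then there exists N > 0 such that for every real x ≥ N: (λ₁ + α₁x)·((x+1)^{−ν} − x^{−ν} − (x+1)^{−μ} + x^{−μ}) + λ₂·x^{−μ} ≤ 0. -/
open Real Set

lemma mvt_rpow_neg (p : ℝ) (x : ℝ) (hx : 0 < x) :
    ∃ c ∈ Set.Ioo x (x+1), (x+1) ^ (-p) - x ^ (-p) = -p * c ^ (-p - 1) := by
  obtain ⟨c, hc, hc'⟩ := exists_hasDerivAt_eq_slope (fun t => t ^ (-p))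
    (fun t => -p * t ^ (-p-1)) (by linarith : x < x + 1)
    (by
      intro t ht
      have ht0 : t ≠ 0 := by
        have := ht.1; intro h; rw [h] at this; linarith
      exact (Real.continuousAt_rpow_const t (-p) (Or.inl ht0)).continuousWithinAt)
    (by
      intro t ht
      have ht0 : t ≠ 0 := ne_of_gt (lt_trans hx ht.1)
      simpa using Real.hasDerivAt_rpow_const (x := t) (p := -p) (Or.inl ht0))
  refine ⟨c, hc, ?_⟩
  rw [hc']
  simp

/-- Supermartingale inequality at the boundary level `y = 0`.
Let `α₁ > 0`, `λ₁, λ₂ > 0` and `0 < ν < μ`. Then there exists `N > 0` such that for every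
real `x ≥ N`:
`(λ₁ + α₁x)·((x+1)^{−ν} − x^{−ν} − (x+1)^{−μ} + x^{−μ}) + λ₂·x^{−μ} ≤ 0`. -/
theorem stmt_15
    (α₁ l₁ l₂ ν μ : ℝ)
    (hα₁ : 0 < α₁) (hl₁ : 0 < l₁) (hl₂ : 0 < l₂)
    (hν : 0 < ν) (hνμ : ν < μ) :
    ∃ N : ℝ, 0 < N ∧ ∀ x : ℝ, N ≤ x →
      (l₁ + α₁ * x) * ((x + 1) ^ (-ν) - x ^ (-ν) - (x + 1) ^ (-μ) + x ^ (-μ)) +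
        l₂ * x ^ (-μ) ≤ 0 := by
  have hμ : 0 < μ := hν.trans hνμ
  set c2 : ℝ := (2:ℝ) ^ (-ν - 1) with hc2def
  have hc2 : 0 < c2 := hc2def ▸ Real.rpow_pos_of_pos two_pos _
  set C : ℝ := α₁ * ν * c2 with hCdef
  have hC : 0 < C := by positivity
  set K : ℝ := (l₁ * μ + α₁ * μ + l₂) / C with hKdef
  have hK : 0 < K := by positivity
  clear_value c2 C K
  refine ⟨max 1 (K ^ (1/(μ-ν))), lt_of_lt_of_le one_pos (le_max_left _ _), ?_⟩
  intro x hxN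
  have hx1 : (1:ℝ) ≤ x := le_trans (le_max_left _ _) hxN
  have hx0 : (0:ℝ) < x := lt_of_lt_of_le one_pos hx1
  have hx10 : (0:ℝ) < x + 1 := by linarith
  -- MVT bounds
  obtain ⟨c₁, hc₁, hD1⟩ := mvt_rpow_neg ν x hx0
  obtain ⟨c₂, hc₂, hD2⟩ := mvt_rpow_neg μ x hx0
  have hc₁0 : 0 < c₁ := lt_trans hx0 hc₁.1
  have hc₂0 : 0 < c₂ := lt_trans hx0 hc₂.1
  have F1 : (x+1) ^ (-ν) - x ^ (-ν) ≤ -ν * (x+1) ^ (-ν - 1) := by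
    rw [hD1]
    have : (x+1) ^ (-ν-1) ≤ c₁ ^ (-ν-1) :=
      Real.rpow_le_rpow_of_nonpos hc₁0 hc₁.2.le (by linarith)
    nlinarith
  have F2 : x ^ (-μ) - (x+1) ^ (-μ) ≤ μ * x ^ (-μ - 1) := by
    have h2 : c₂ ^ (-μ-1) ≤ x ^ (-μ-1) :=
      Real.rpow_le_rpow_of_nonpos hx0 hc₂.1.le (by linarith)
    nlinarith [hD2]
  -- F3 : x * (x+1)^(-ν-1) ≥ c2 * x^(-ν)
  have F3 : c2 * x ^ (-ν) ≤ x * (x+1) ^ (-ν - 1) := by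
    have h1 : (x+1) ^ (-ν-1) ≥ (2*x) ^ (-ν-1) :=
      Real.rpow_le_rpow_of_nonpos (by linarith) (by linarith) (by linarith)
    have h2 : (2*x) ^ (-ν-1) = c2 * x ^ (-ν-1) := by
      rw [Real.mul_rpow (by norm_num) hx0.le, hc2def]
    have h3 : x * x ^ (-ν-1) = x ^ (-ν) := by
      nth_rewrite 1 [← Real.rpow_one x]
      rw [← Real.rpow_add hx0]; ring_nf
    calc c2 * x ^ (-ν) = x * (c2 * x ^ (-ν-1)) := by rw [← h3]; ring
    _ = x * (2*x) ^ (-ν-1) := by rw [h2]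
    _ ≤ x * (x+1) ^ (-ν-1) := by
        apply mul_le_mul_of_nonneg_left h1 hx0.le
  have F4 : x * x ^ (-μ - 1) = x ^ (-μ) := by
    nth_rewrite 1 [← Real.rpow_one x]
    rw [← Real.rpow_add hx0]; ring_nf
  have F5 : x ^ (-μ - 1) ≤ x ^ (-μ) := by
    apply Real.rpow_le_rpow_of_exponent_le hx1; linarith
  have F6 : (l₁ * μ + α₁ * μ + l₂) * x ^ (-μ) ≤ C * x ^ (-ν) := by
    have hxK : K ^ (1/(μ-ν)) ≤ x := le_trans (le_max_right _ _) hxN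
    have hxpow : K ≤ x ^ (μ - ν) := by
      calc K = (K ^ (1/(μ-ν))) ^ (μ-ν) := by
            rw [← Real.rpow_mul hK.le, one_div_mul_cancel (by linarith : μ - ν ≠ 0),
              Real.rpow_one]
      _ ≤ x ^ (μ-ν) := Real.rpow_le_rpow (Real.rpow_nonneg hK.le _) hxK (by linarith)
    have key : (l₁ * μ + α₁ * μ + l₂) ≤ C * x ^ (μ - ν) := by
      rw [hKdef] at hxpow
      calc (l₁ * μ + α₁ * μ + l₂) = C * ((l₁ * μ + α₁ * μ + l₂)/C) := by field_simp
      _ ≤ C * x ^ (μ-ν) := mul_le_mul_of_nonneg_left hxpow hC.le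
    have hsplit : x ^ (μ - ν) * x ^ (-μ) = x ^ (-ν) := by
      rw [← Real.rpow_add hx0]; ring_nf
    calc (l₁ * μ + α₁ * μ + l₂) * x ^ (-μ) ≤ (C * x ^ (μ-ν)) * x ^ (-μ) :=
          mul_le_mul_of_nonneg_right key (Real.rpow_nonneg hx0.le _)
    _ = C * x ^ (-ν) := by rw [mul_assoc, hsplit]
  -- combine
  have hla : 0 < l₁ + α₁ * x := by positivity
  have hs : 0 ≤ (x+1) ^ (-ν - 1) := Real.rpow_nonneg hx10.le _
  have hu : 0 ≤ x ^ (-μ - 1) := Real.rpow_nonneg hx0.le _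
  have hmain : (l₁ + α₁ * x) * ((x + 1) ^ (-ν) - x ^ (-ν) - (x + 1) ^ (-μ) + x ^ (-μ))
      ≤ (l₁ + α₁ * x) * (-ν * (x+1) ^ (-ν-1) + μ * x ^ (-μ-1)) := by
    apply mul_le_mul_of_nonneg_left _ hla.le
    linarith [F1, F2]
  have expand : (l₁ + α₁ * x) * (-ν * (x+1) ^ (-ν-1) + μ * x ^ (-μ-1)) + l₂ * x ^ (-μ)
      ≤ 0 := by
    have F6' := F6
    rw [hCdef] at F6'
    nlinarith [F4, hs, hu, mul_le_mul_of_nonneg_left F3 (mul_pos hα₁ hν).le,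
      mul_le_mul_of_nonneg_left F5 (mul_pos hl₁ hμ).le, F6',
      mul_le_mul_of_nonneg_left F4.le (mul_pos hα₁ hμ).le,
      mul_le_mul_of_nonneg_left F4.ge (mul_pos hα₁ hμ).le,
      mul_nonneg (mul_pos hl₁ hν).le hs]
  linarith
end

section
/- Let α₁ > 0, α₂ ≥ 0, β₁ ≥ 0, β₂ > 0, λ₁, λ₂ > 0 and 0 < ν < μ < 1. Then there exists N ≥ 2 such that for every real x ≥ N: (λ₁ + α₁x)·((x+1)^{−ν} − x^{−ν}) + β₁·((x−1)^{−ν} − x^{−ν}) + (λ₂ + α₂)·(1 − x^{−ν}) − β₂·x^{1−μ} ≤ 0. -/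
/-- Supermartingale inequality at level `y = 1`, linear interaction.
Let `α₁ > 0`, `α₂ ≥ 0`, `β₁ ≥ 0`, `β₂ > 0`, `λ₁, λ₂ > 0` and `0 < ν < μ < 1`. Then there
exists `N ≥ 2` such that for every real `x ≥ N`:
`(λ₁ + α₁x)·((x+1)^{−ν} − x^{−ν}) + β₁·((x−1)^{−ν} − x^{−ν}) + (λ₂ + α₂)·(1 − x^{−ν})
  − β₂·x^{1−μ} ≤ 0`. -/
theorem stmt_17
    (α₁ α₂ β₁ β₂ l₁ l₂ ν μ : ℝ)
    (hα₁ : 0 < α₁) (hα₂ : 0 ≤ α₂) (hβ₁ : 0 ≤ β₁) (hβ₂ : 0 < β₂)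
    (hl₁ : 0 < l₁) (hl₂ : 0 < l₂)
    (hν : 0 < ν) (hνμ : ν < μ) (hμ : μ < 1) :
    ∃ N : ℝ, 2 ≤ N ∧ ∀ x : ℝ, N ≤ x →
      (l₁ + α₁ * x) * ((x + 1) ^ (-ν) - x ^ (-ν)) +
        β₁ * ((x - 1) ^ (-ν) - x ^ (-ν)) +
        (l₂ + α₂) * (1 - x ^ (-ν)) - β₂ * x ^ (1 - μ) ≤ 0 := by
  set c : ℝ := (β₁ + l₂ + α₂) / β₂ with hc
  have hc0 : 0 ≤ c := by positivity
  have h1μ : 0 < 1 - μ := by linarith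
  refine ⟨max 2 (c ^ (1 - μ)⁻¹), le_max_left _ _, fun x hx => ?_⟩
  have hx2 : (2 : ℝ) ≤ x := le_trans (le_max_left _ _) hx
  have hx0 : 0 < x := by linarith
  have hxm1 : (1 : ℝ) ≤ x - 1 := by linarith
  -- first term ≤ 0
  have t1 : (x + 1) ^ (-ν) ≤ x ^ (-ν) :=
    Real.rpow_le_rpow_of_nonpos hx0 (by linarith) (by linarith)
  have hcoef : 0 < l₁ + α₁ * x := by nlinarith
  have T1 : (l₁ + α₁ * x) * ((x + 1) ^ (-ν) - x ^ (-ν)) ≤ 0 := by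
    apply mul_nonpos_of_nonneg_of_nonpos hcoef.le; linarith
  -- second term ≤ β₁
  have t2 : (x - 1) ^ (-ν) ≤ 1 :=
    Real.rpow_le_one_of_one_le_of_nonpos hxm1 (by linarith)
  have hxnn : 0 ≤ x ^ (-ν) := Real.rpow_nonneg hx0.le _
  have T2 : β₁ * ((x - 1) ^ (-ν) - x ^ (-ν)) ≤ β₁ := by nlinarith
  -- third term ≤ l₂ + α₂
  have T3 : (l₂ + α₂) * (1 - x ^ (-ν)) ≤ l₂ + α₂ := by nlinarith
  -- last term
  have t4 : c ≤ x ^ (1 - μ) := by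
    have h := Real.rpow_le_rpow (Real.rpow_nonneg hc0 _)
      (le_trans (le_max_right _ _) hx) h1μ.le
    rwa [Real.rpow_inv_rpow hc0 h1μ.ne'] at h
  have T4 : β₁ + l₂ + α₂ ≤ β₂ * x ^ (1 - μ) := by
    have := mul_le_mul_of_nonneg_left t4 hβ₂.le
    rw [hc, mul_div_cancel₀ _ hβ₂.ne'] at this
    linarith
  linarith
end

section
/- Let λ₁, λ₂ > 0, β₁ ≥ 0, β₂ > 0 and α₂ ≥ 0. Then there exists N > 1 such that for every real x ≥ N the following three inequalities hold: (i) λ₁·(g(x+1,0) − g(x,0)) + λ₂·(g(x,1) − g(x,0)) ≤ 0; (ii) λ₁·(g(x+1,1) − g(x,1)) + β₁·(g(x−1,1) − g(x,1)) + (λ₂ + α₂)·(g(x,2) − g(x,1)) + β₂x·(g(x,0) − g(x,1)) ≤ 0; (iii) λ₁·(g(x+1,2) − g(x,2)) + 2β₁·(g(x−1,2) − g(x,2)) + (λ₂ + 2α₂)·(g(x,3) − g(x,2)) + β₂x·(g(x,1) − g(x,2)) ≤ 0. -/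
/-!
Put `L = log x`. Since `log (x ± 1) - log x = ±1/x + O(1/x²)`, every left-hand side is an
explicit expression in `x`, `L` and `log (x ± 1)` with a negative dominant term. In (iii) it is
`-β₂ x / L³`, which beats the bounded remaining terms; in (ii) it is `-β₂ (λ₁/λ₂) / L²`, which
beats the `O(1/L³)` rest. In (i) the increment `-λ₁ / (x L²)` of `λ₁ / ln x` is cancelled by the
term `λ₂ (λ₁/λ₂) / (x L²)`, leaving `-λ₂ / (x L³)`, which beats the errors `O(1/(x L⁴))` and
`O(1/x²)`. All three comparisons only need `(log x)³ = o(x)`.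
-/

open Real Filter Asymptotics

-- `g (x, 1) = g₁ (log x)` and `g (x, 0) = g₀ (λ₁ / λ₂) x (log x)`.
noncomputable def g₁ (L : ℝ) : ℝ := 1 / L - 1 / L ^ 3

noncomputable def g₀ (r x L : ℝ) : ℝ := g₁ L - r / (x * L ^ 2) + 1 / (x * L ^ 3)

theorem log_sub_log_le_div {a b : ℝ} (ha : 0 < a) (hb : 0 < b) :
    log b - log a ≤ (b - a) / a := by
  have h := log_le_sub_one_of_pos (div_pos hb ha)
  rwa [log_div hb.ne' ha.ne', div_sub_one ha.ne'] at h

theorem div_le_log_sub_log {a b : ℝ} (ha : 0 < a) (hb : 0 < b) :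
    (b - a) / b ≤ log b - log a := by
  have h := log_le_sub_one_of_pos (div_pos ha hb)
  rw [log_div ha.ne' hb.ne', div_sub_one hb.ne'] at h
  linarith [show (a - b) / b = -((b - a) / b) by ring]

theorem eventually_le_log_sub_one (C : ℝ) : ∀ᶠ x in atTop, C ≤ log (x - 1) := by
  filter_upwards [eventually_ge_atTop (exp C + 1)] with x hx
  rw [le_log_iff_exp_le (by linarith [exp_pos C])]
  linarith

theorem eventually_mul_le_mul_of_isLittleO_id {f : ℝ → ℝ} (hf : f =o[atTop] id) (C : ℝ)
    {d : ℝ} (hd : 0 < d) : ∀ᶠ x in atTop, C * f x ≤ d * x := by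
  filter_upwards [(hf.const_mul_left C).bound hd, eventually_ge_atTop 0] with x hx hx0
  rw [norm_mul, id, norm_of_nonneg hx0] at hx
  exact (le_abs_self _).trans ((abs_mul C (f x)).symm ▸ hx)

theorem one_div_sub_one_div_le_sub {K L : ℝ} (hK : 1 ≤ K) (hKL : K ≤ L) :
    1 / K - 1 / L ≤ L - K := by
  have hL : 1 ≤ L := hK.trans hKL
  rw [div_sub_div _ _ (by positivity) (by positivity), div_le_iff₀ (by positivity)]
  nlinarith [mul_le_mul hK hL zero_le_one (by positivity), sub_nonneg.2 hKL]

theorem one_div_pow_three_sub_le {L M : ℝ} (hL : 0 < L) (hLM : L ≤ M) :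
    1 / L ^ 3 - 1 / M ^ 3 ≤ 3 * (M - L) / L ^ 4 := by
  have hM : 0 < M := hL.trans_le hLM
  have hq : (M ^ 2 + M * L + L ^ 2) * L ≤ 3 * M ^ 3 := by
    nlinarith [mul_le_mul hLM hLM hL.le hM.le, mul_le_mul_of_nonneg_left hLM (sq_nonneg M)]
  have key := mul_le_mul_of_nonneg_left hq (mul_nonneg (sub_nonneg.2 hLM) (pow_nonneg hL.le 3))
  rw [div_sub_div _ _ (by positivity) (by positivity),
    div_le_div_iff₀ (by positivity) (by positivity)]
  nlinarith [key]

theorem one_div_sub_one_div_add_le {x L M : ℝ} (hx : 0 < x) (hL : 1 ≤ L) (hLM : L ≤ M)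
    (h₁ : 1 / (x + 1) ≤ M - L) (h₂ : M - L ≤ 1 / x) :
    1 / M - 1 / L + 1 / (x * L ^ 2) ≤ 2 / (x ^ 2 * L ^ 2) := by
  have hL0 : 0 < L := by positivity
  have hM : 1 ≤ M := hL.trans hLM
  have hsub : 1 / M - 1 / L ≤ -(1 / ((x + 1) * (L * M))) := by
    have e : 1 / M - 1 / L = -((M - L) / (L * M)) := by field_simp; ring
    rw [e, neg_le_neg_iff, ← div_div]
    exact div_le_div_of_nonneg_right h₁ (by positivity)
  have key : (x + 1) * M - x * L ≤ 2 * M := by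
    rw [le_div_iff₀ hx] at h₂
    nlinarith
  have hadd : 1 / (x * L ^ 2) - 1 / ((x + 1) * (L * M)) ≤ 2 / (x ^ 2 * L ^ 2) := by
    rw [div_sub_div _ _ (by positivity) (by positivity),
      div_le_div_iff₀ (by positivity) (by positivity)]
    nlinarith [mul_le_mul_of_nonneg_right key (by positivity : (0 : ℝ) ≤ x ^ 2 * L ^ 3),
      (by positivity : (0 : ℝ) ≤ x * L ^ 3 * M)]
  linarith

theorem one_div_mul_sq_sub_le {x L M : ℝ} (hx : 0 < x) (hL : 1 ≤ L) (hLM : L ≤ M)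
    (h₂ : M - L ≤ 1 / x) :
    1 / (x * L ^ 2) - 1 / ((x + 1) * M ^ 2) ≤ 3 / (x ^ 2 * L ^ 2) := by
  have hM : 1 ≤ M := hL.trans hLM
  have key : (x + 1) * M ^ 2 - x * L ^ 2 ≤ 3 * M ^ 2 := by
    rw [le_div_iff₀ hx] at h₂
    nlinarith
  rw [div_sub_div _ _ (by positivity) (by positivity),
    div_le_div_iff₀ (by positivity) (by positivity)]
  nlinarith [mul_le_mul_of_nonneg_right key (by positivity : (0 : ℝ) ≤ x ^ 2 * L ^ 2),
    (by positivity : (0 : ℝ) ≤ x * L ^ 2 * M ^ 2)]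

theorem g₁_sub_g₁_le {L M : ℝ} (hL : 0 < L) (hLM : L ≤ M) : g₁ M - g₁ L ≤ 1 / L ^ 3 := by
  have h₁ : 1 / M ≤ 1 / L := one_div_le_one_div_of_le hL hLM
  have h₂ : 0 ≤ 1 / M ^ 3 := by have := hL.trans_le hLM; positivity
  unfold g₁
  linarith

-- Since `l₂ * (l₁ / l₂) = l₁`, the `1 / (x L²)` terms of `g₀` cancel the leading part
-- of `1 / M - 1 / L`.
theorem drift₀_eq {l₁ l₂ x L M : ℝ} (hl₂ : l₂ ≠ 0) (hx : 0 < x) (hL : L ≠ 0) (hM : M ≠ 0) :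
    l₁ * (g₀ (l₁ / l₂) (x + 1) M - g₀ (l₁ / l₂) x L) + l₂ * (g₁ L - g₀ (l₁ / l₂) x L) =
      l₁ * ((1 / M - 1 / L + 1 / (x * L ^ 2)) + (1 / L ^ 3 - 1 / M ^ 3)
        + l₁ / l₂ * (1 / (x * L ^ 2) - 1 / ((x + 1) * M ^ 2))
        + (1 / ((x + 1) * M ^ 3) - 1 / (x * L ^ 3))) - l₂ / (x * L ^ 3) := by
  have hx₁ : x + 1 ≠ 0 := by positivity
  unfold g₀ g₁
  field_simp
  ring

theorem drift₀_nonpos {l₁ l₂ x L M : ℝ} (hl₁ : 0 < l₁) (hl₂ : 0 < l₂) (hx : 0 < x)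
    (hL : 1 ≤ L) (hLM : L ≤ M) (h₁ : 1 / (x + 1) ≤ M - L) (h₂ : M - L ≤ 1 / x)
    (hL₁ : 6 * l₁ ≤ l₂ * L) (hx₁ : 2 * (2 + 3 * (l₁ / l₂)) * l₁ * L ≤ l₂ * x) :
    l₁ * (g₀ (l₁ / l₂) (x + 1) M - g₀ (l₁ / l₂) x L) + l₂ * (g₁ L - g₀ (l₁ / l₂) x L) ≤ 0 := by
  have hL0 : 0 < L := by positivity
  rw [drift₀_eq hl₂.ne' hx hL0.ne' (hL0.trans_le hLM).ne']
  set r := l₁ / l₂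
  have hr0 : 0 ≤ r := by positivity
  have hcube : 1 / L ^ 3 - 1 / M ^ 3 ≤ 3 / (x * L ^ 4) := by
    refine (one_div_pow_three_sub_le hL0 hLM).trans ?_
    rw [le_div_iff₀ hx] at h₂
    rw [div_le_div_iff₀ (by positivity) (by positivity)]
    nlinarith [pow_pos hL0 4]
  have htail : 1 / ((x + 1) * M ^ 3) - 1 / (x * L ^ 3) ≤ 0 := by
    rw [sub_nonpos]
    gcongr
    linarith
  have hfirst : l₁ * (3 / (x * L ^ 4)) ≤ l₂ / (2 * (x * L ^ 3)) := by
    rw [mul_div_assoc', div_le_div_iff₀ (by positivity) (by positivity)]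
    nlinarith [mul_le_mul_of_nonneg_right hL₁ (by positivity : (0 : ℝ) ≤ x * L ^ 3 * x)]
  have hsecond : l₁ * (2 / (x ^ 2 * L ^ 2)) + l₁ * (r * (3 / (x ^ 2 * L ^ 2)))
      ≤ l₂ / (2 * (x * L ^ 3)) := by
    have e : l₁ * (2 / (x ^ 2 * L ^ 2)) + l₁ * (r * (3 / (x ^ 2 * L ^ 2)))
        = (2 + 3 * r) * l₁ / (x ^ 2 * L ^ 2) := by ring
    rw [e, div_le_div_iff₀ (by positivity) (by positivity)]
    nlinarith [mul_le_mul_of_nonneg_right hx₁ (by positivity : (0 : ℝ) ≤ x * L ^ 2)]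
  have hT1 := mul_le_mul_of_nonneg_left (one_div_sub_one_div_add_le hx hL hLM h₁ h₂) hl₁.le
  have hT2 := mul_le_mul_of_nonneg_left hcube hl₁.le
  have hT3 := mul_le_mul_of_nonneg_left
    (mul_le_mul_of_nonneg_left (one_div_mul_sq_sub_le hx hL hLM h₂) hr0) hl₁.le
  have hT4 := mul_nonpos_of_nonneg_of_nonpos hl₁.le htail
  have : l₂ / (x * L ^ 3) = 2 * (l₂ / (2 * (x * L ^ 3))) := by field_simp
  linarith

theorem drift₁_nonpos {a b c d r x K L M : ℝ} (ha : 0 ≤ a) (hb : 0 ≤ b) (hK : 1 ≤ K)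
    (hKL : K ≤ L) (hLM : L ≤ M) (hx : 0 < x) (hLK : L - K ≤ 2 / x) (hLx : L ^ 3 ≤ x)
    (h : a + 2 * b + c + d ≤ d * r * L) :
    a * (g₁ M - g₁ L) + b * (g₁ K - g₁ L) + c * (1 / L - g₁ L)
      + d * x * (g₀ r x L - g₁ L) ≤ 0 := by
  have hK0 : 0 < K := by positivity
  have hL0 : 0 < L := hK0.trans_le hKL
  have hback : g₁ K - g₁ L ≤ 2 / L ^ 3 := by
    have hcube : 1 / L ^ 3 ≤ 1 / K ^ 3 := by gcongr
    calc g₁ K - g₁ L ≤ 1 / K - 1 / L := by unfold g₁; linarith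
      _ ≤ L - K := one_div_sub_one_div_le_sub hK hKL
      _ ≤ 2 / x := hLK
      _ ≤ 2 / L ^ 3 := by gcongr
  have hC : c * (1 / L - g₁ L) = c / L ^ 3 := by unfold g₁; ring
  have hD : d * x * (g₀ r x L - g₁ L) = d / L ^ 3 - d * r / L ^ 2 := by
    unfold g₀; field_simp; ring
  have hfinal : (a + 2 * b + c + d) / L ^ 3 ≤ d * r / L ^ 2 := by
    rw [div_le_div_iff₀ (by positivity) (by positivity)]
    nlinarith [mul_le_mul_of_nonneg_right h (sq_nonneg L)]
  have hA := mul_le_mul_of_nonneg_left (g₁_sub_g₁_le hL0 hLM) ha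
  have hB := mul_le_mul_of_nonneg_left hback hb
  rw [hC, hD]
  have e : (a + 2 * b + c + d) / L ^ 3 =
      a * (1 / L ^ 3) + b * (2 / L ^ 3) + c / L ^ 3 + d / L ^ 3 := by
    ring
  linarith

theorem drift₂_nonpos {a b c d x K L M : ℝ} (ha : 0 ≤ a) (hb : 0 ≤ b) (hc : 0 ≤ c)
    (hK : 1 ≤ K) (hL : 0 < L) (hLM : L ≤ M) (h : (b + c) * L ^ 3 ≤ d * x) :
    a * (1 / M - 1 / L) + b * (1 / K - 1 / L) + c * (1 - 1 / L)
      + d * x * (g₁ L - 1 / L) ≤ 0 := by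
  have hA : a * (1 / M - 1 / L) ≤ 0 :=
    mul_nonpos_of_nonneg_of_nonpos ha (by linarith [one_div_le_one_div_of_le hL hLM])
  have hL' : 0 < 1 / L := by positivity
  have hB : b * (1 / K - 1 / L) ≤ b :=
    mul_le_of_le_one_right hb (by linarith [(div_le_one (by positivity)).2 hK])
  have hC : c * (1 - 1 / L) ≤ c := mul_le_of_le_one_right hc (by linarith)
  have hD : d * x * (g₁ L - 1 / L) = -(d * x / L ^ 3) := by unfold g₁; ring
  have hdx : b + c ≤ d * x / L ^ 3 := by rwa [le_div_iff₀ (by positivity)]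
  linarith

theorem eventually_drift₀_nonpos {l₁ l₂ : ℝ} (hl₁ : 0 < l₁) (hl₂ : 0 < l₂) :
    ∀ᶠ x in atTop, l₁ * (g₀ (l₁ / l₂) (x + 1) (log (x + 1)) - g₀ (l₁ / l₂) x (log x))
      + l₂ * (g₁ (log x) - g₀ (l₁ / l₂) x (log x)) ≤ 0 := by
  filter_upwards [eventually_gt_atTop 0, tendsto_log_atTop.eventually_ge_atTop 1,
    tendsto_log_atTop.eventually_ge_atTop (6 * l₁ / l₂),
    eventually_mul_le_mul_of_isLittleO_id isLittleO_log_id_atTop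
      (2 * (2 + 3 * (l₁ / l₂)) * l₁) hl₂] with x hx hL hL₁ hx₁
  have hx' : 0 < x + 1 := by linarith
  refine drift₀_nonpos hl₁ hl₂ hx hL (log_le_log hx (by linarith)) ?_ ?_
    ((div_le_iff₀' hl₂).1 hL₁) (by linarith)
  · simpa using div_le_log_sub_log hx hx'
  · simpa using log_sub_log_le_div hx hx'

theorem eventually_drift₁_nonpos {a b c d r : ℝ} (ha : 0 ≤ a) (hb : 0 ≤ b)
    (hdr : 0 < d * r) :
    ∀ᶠ x in atTop, a * (g₁ (log (x + 1)) - g₁ (log x)) + b * (g₁ (log (x - 1)) - g₁ (log x))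
      + c * (1 / log x - g₁ (log x)) + d * x * (g₀ r x (log x) - g₁ (log x)) ≤ 0 := by
  filter_upwards [eventually_ge_atTop 2, eventually_le_log_sub_one 1,
    tendsto_log_atTop.eventually_ge_atTop ((a + 2 * b + c + d) / (d * r)),
    eventually_mul_le_mul_of_isLittleO_id isLittleO_pow_log_id_atTop 1 one_pos]
    with x hx hK hL hLx
  have hx₁ : 0 < x - 1 := by linarith
  have hLK : log x - log (x - 1) ≤ 2 / x := by
    refine (log_sub_log_le_div hx₁ (by linarith)).trans ?_
    rw [div_le_div_iff₀ hx₁ (by linarith)]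
    linarith
  exact drift₁_nonpos ha hb hK (log_le_log hx₁ (by linarith)) (log_le_log (by linarith)
    (by linarith)) (by linarith) hLK (by simpa using hLx) ((div_le_iff₀' hdr).1 hL)

theorem eventually_drift₂_nonpos {a b c d : ℝ} (ha : 0 ≤ a) (hb : 0 ≤ b) (hc : 0 ≤ c)
    (hd : 0 < d) :
    ∀ᶠ x in atTop, a * (1 / log (x + 1) - 1 / log x) + b * (1 / log (x - 1) - 1 / log x)
      + c * (1 - 1 / log x) + d * x * (g₁ (log x) - 1 / log x) ≤ 0 := by
  filter_upwards [eventually_ge_atTop 2, eventually_le_log_sub_one 1,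
    eventually_mul_le_mul_of_isLittleO_id isLittleO_pow_log_id_atTop (b + c) hd]
    with x hx hK hLx
  have hL : 0 < log x := by
    linarith [log_le_log (by linarith : 0 < x - 1) (by linarith : x - 1 ≤ x)]
  exact drift₂_nonpos ha hb hc hK hL (log_le_log (by linarith) (by linarith)) hLx

/-- Supermartingale inequalities for the logarithmic Lyapunov function
in the case `α₁ = 0`. For `x > 1` let
`g(x,0) = 1/ln x − 1/(ln x)³ − (λ₁/λ₂)/(x(ln x)²) + 1/(x(ln x)³)`,
`g(x,1) = 1/ln x − 1/(ln x)³`, `g(x,2) = 1/ln x`, `g(x,3) = 1`. If `λ₁, λ₂ > 0`,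
`β₁ ≥ 0`, `β₂ > 0`, `α₂ ≥ 0`, then there exists `N > 1` such that for every real `x ≥ N`
the three generator inequalities (i)–(iii) hold. -/
theorem stmt_18
    (l₁ l₂ β₁ β₂ α₂ : ℝ)
    (hl₁ : 0 < l₁) (hl₂ : 0 < l₂) (hβ₁ : 0 ≤ β₁) (hβ₂ : 0 < β₂) (hα₂ : 0 ≤ α₂)
    (g : ℝ → ℕ → ℝ)
    (hg0 : ∀ x : ℝ, 1 < x → g x 0 =
      1 / Real.log x - 1 / (Real.log x) ^ 3 - (l₁ / l₂) / (x * (Real.log x) ^ 2) +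
        1 / (x * (Real.log x) ^ 3))
    (hg1 : ∀ x : ℝ, 1 < x → g x 1 = 1 / Real.log x - 1 / (Real.log x) ^ 3)
    (hg2 : ∀ x : ℝ, 1 < x → g x 2 = 1 / Real.log x)
    (hg3 : ∀ x : ℝ, 1 < x → g x 3 = 1) :
    ∃ N : ℝ, 1 < N ∧ ∀ x : ℝ, N ≤ x →
      (l₁ * (g (x + 1) 0 - g x 0) + l₂ * (g x 1 - g x 0) ≤ 0) ∧
      (l₁ * (g (x + 1) 1 - g x 1) + β₁ * (g (x - 1) 1 - g x 1) +
        (l₂ + α₂) * (g x 2 - g x 1) + β₂ * x * (g x 0 - g x 1) ≤ 0) ∧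
      (l₁ * (g (x + 1) 2 - g x 2) + 2 * β₁ * (g (x - 1) 2 - g x 2) +
        (l₂ + 2 * α₂) * (g x 3 - g x 2) + β₂ * x * (g x 1 - g x 2) ≤ 0) := by
  obtain ⟨N, hN⟩ := eventually_atTop.1 <| (eventually_gt_atTop 2).and <|
    (eventually_drift₀_nonpos hl₁ hl₂).and <|
    (eventually_drift₁_nonpos (c := l₂ + α₂) hl₁.le hβ₁ (mul_pos hβ₂ (div_pos hl₁ hl₂))).and
    (eventually_drift₂_nonpos (b := 2 * β₁) (c := l₂ + 2 * α₂) hl₁.le (by positivity)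
      (by positivity) hβ₂)
  refine ⟨max N 2, by simp, fun x hx => ?_⟩
  obtain ⟨hx2, h₀, h₁, h₂⟩ := hN x (le_of_max_le_left hx)
  rw [hg0 x (by linarith), hg0 (x + 1) (by linarith), hg1 x (by linarith),
    hg1 (x + 1) (by linarith), hg1 (x - 1) (by linarith), hg2 x (by linarith),
    hg2 (x + 1) (by linarith), hg2 (x - 1) (by linarith), hg3 x (by linarith)]
  exact ⟨h₀, h₁, h₂⟩
end
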